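/- For every z ∈ ℂ with Re z > 0 and z ≠ 1: ζ(z) = z·∫_1^∞ (⌊x⌋ − x + 1/2)·x^{−z−1} dx + 1/(z−1) + 1/2, where the integral over [1,∞) is absolutely convergent. (Formula (2) of the paper's Example 3.26.1, giving the analytic continuation of ζ to Re z > 0.) -/

import Mathlib

open MeasureTheory Set Complex

/-!
For `Re s > 1`, Abel summation gives `ζ(s) = s ∫₁^∞ ⌊x⌋ x^(-s-1) dx`; writing
`⌊x⌋ = (⌊x⌋ - x + 1/2) + x - 1/2` and integrating the last two terms explicitly yields the formula
there. The sawtooth integral is the Mellin transform at `-s` of a bounded function vanishing on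
`(0, 1]`, hence holomorphic on `Re s > 0`, and the identity theorem on the connected set
`{Re s > 0} \ {1}` extends the formula.
-/

open Filter Topology Asymptotics

noncomputable def sawtooth (x : ℝ) : ℝ := ⌊x⌋ - x + 1 / 2

lemma abs_sawtooth_le (x : ℝ) : |sawtooth x| ≤ 1 / 2 := by
  rw [sawtooth, abs_le]
  constructor <;> linarith [Int.floor_le x, Int.lt_floor_add_one x]

lemma measurable_sawtooth : Measurable sawtooth := by
  unfold sawtooth; fun_prop

section Mellin

variable {E : Type*} [NormedAddCommGroup E] [NormedSpace ℂ E]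

lemma mellinConvergent_indicator_Ioi_iff {f : ℝ → E} {c : ℝ} (hc : 0 ≤ c) {s : ℂ} :
    MellinConvergent ((Ioi c).indicator f) s ↔
      IntegrableOn (fun t : ℝ ↦ (t : ℂ) ^ (s - 1) • f t) (Ioi c) := by
  rw [MellinConvergent, ← indicator_smul, integrableOn_indicator_iff measurableSet_Ioi,
    Ioi_inter_Ioi, sup_eq_left.mpr hc]

lemma mellin_indicator_Ioi (f : ℝ → E) {c : ℝ} (hc : 0 ≤ c) (s : ℂ) :
    mellin ((Ioi c).indicator f) s = ∫ t in Ioi c, (t : ℂ) ^ (s - 1) • f t := by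
  rw [mellin, ← indicator_smul, setIntegral_indicator measurableSet_Ioi, Ioi_inter_Ioi,
    sup_eq_right.mpr hc]

end Mellin

lemma isPreconnected_re_pos_diff_singleton {p : ℂ} (hp : 0 < p.re) :
    IsPreconnected ({z : ℂ | 0 < z.re} \ {p}) := by
  -- `φ` is a homeomorphism from `ℂ` onto the right half-plane.
  set φ : ℂ → ℂ := fun w ↦ Real.exp w.re + w.im * I
  have hφ_inj : φ.Injective := fun w w' h ↦ by
    have hre := congrArg re h
    have him := congrArg im h
    simp only [φ, add_re, ofReal_re, mul_re, I_re, I_im, ofReal_im, add_im, mul_im] at hre him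
    apply Complex.ext <;> simp_all
  have hφ_range : range φ = {z : ℂ | 0 < z.re} := by
    ext z
    refine ⟨?_, fun hz ↦ ⟨Real.log z.re + z.im * I, ?_⟩⟩
    · rintro ⟨w, rfl⟩
      simp [φ, -ofReal_exp, Real.exp_pos]
    · apply Complex.ext <;> simp [φ, -ofReal_exp, Real.exp_log (show 0 < z.re from hz)]
  have hφ_p : φ (Real.log p.re + p.im * I) = p := by
    apply Complex.ext <;> simp [φ, -ofReal_exp, Real.exp_log hp]
  rw [← hφ_range, ← hφ_p, ← image_singleton, ← image_compl_eq_range_sdiff_image hφ_inj]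
  exact (isConnected_compl_singleton_of_one_lt_rank (by simp) _).isPreconnected.image _
    (by fun_prop)

lemma norm_indicator_sawtooth_le (x : ℝ) :
    ‖(Ioi 1).indicator (fun x ↦ (sawtooth x : ℂ)) x‖ ≤ 1 / 2 := by
  rw [norm_indicator_eq_indicator_norm]
  refine indicator_le_self' (fun _ _ ↦ by norm_num) x |>.trans ?_
  simpa only [norm_real, Real.norm_eq_abs] using abs_sawtooth_le x

lemma isBigO_indicator_sawtooth_atTop :
    (Ioi 1).indicator (fun x ↦ (sawtooth x : ℂ)) =O[atTop] fun x : ℝ ↦ x ^ (-(0 : ℝ)) := by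
  refine IsBigO.of_bound (1 / 2) (Eventually.of_forall fun x ↦ ?_)
  rw [neg_zero, Real.rpow_zero, norm_one, mul_one]
  exact norm_indicator_sawtooth_le x

lemma isBigO_indicator_sawtooth_nhdsGT_zero (b : ℝ) :
    (Ioi 1).indicator (fun x ↦ (sawtooth x : ℂ)) =O[𝓝[>] 0] fun x : ℝ ↦ x ^ (-b) := by
  refine EventuallyEq.trans_isBigO ?_ (isBigO_zero _ _)
  filter_upwards [Ioo_mem_nhdsGT (zero_lt_one' ℝ)] with x hx
  exact indicator_of_notMem (not_lt.mpr hx.2.le) _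

lemma locallyIntegrableOn_indicator_sawtooth :
    LocallyIntegrableOn ((Ioi 1).indicator fun x ↦ (sawtooth x : ℂ)) (Ioi 0) := by
  rw [locallyIntegrableOn_iff isOpen_Ioi.isLocallyClosed]
  intro k _ hk
  refine Measure.integrableOn_of_bounded (M := 1 / 2) hk.measure_lt_top.ne
    ((measurable_sawtooth.complex_ofReal).indicator measurableSet_Ioi).aestronglyMeasurable
    (ae_of_all _ norm_indicator_sawtooth_le)

lemma integrableOn_sawtooth_mul_cpow {s : ℂ} (hs : 0 < s.re) :
    IntegrableOn (fun x : ℝ ↦ (sawtooth x : ℂ) * (x : ℂ) ^ (-s - 1)) (Ioi 1) := by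
  have := mellinConvergent_of_isBigO_rpow (s := -s) locallyIntegrableOn_indicator_sawtooth
    isBigO_indicator_sawtooth_atTop (by simpa using hs)
    (isBigO_indicator_sawtooth_nhdsGT_zero (-s.re - 1)) (by simp)
  rw [mellinConvergent_indicator_Ioi_iff zero_le_one] at this
  simpa only [smul_eq_mul, mul_comm] using this

lemma differentiableAt_integral_sawtooth_mul_cpow {s : ℂ} (hs : 0 < s.re) :
    DifferentiableAt ℂ
      (fun w : ℂ ↦ ∫ x in Ioi (1 : ℝ), (sawtooth x : ℂ) * (x : ℂ) ^ (-w - 1)) s := by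
  have hmellin : DifferentiableAt ℂ (mellin ((Ioi 1).indicator fun x ↦ (sawtooth x : ℂ))) (-s) :=
    mellin_differentiableAt_of_isBigO_rpow locallyIntegrableOn_indicator_sawtooth
      isBigO_indicator_sawtooth_atTop (by simpa using hs)
      (isBigO_indicator_sawtooth_nhdsGT_zero (-s.re - 1)) (by simp)
  have hcomp : (fun w : ℂ ↦ ∫ x in Ioi (1 : ℝ), (sawtooth x : ℂ) * (x : ℂ) ^ (-w - 1)) =
      mellin ((Ioi 1).indicator fun x ↦ (sawtooth x : ℂ)) ∘ Neg.neg := by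
    ext w
    simp only [Function.comp_apply, mellin_indicator_Ioi _ zero_le_one, smul_eq_mul, mul_comm]
  rw [hcomp]
  exact hmellin.comp s (differentiable_neg s)

lemma riemannZeta_eq_mul_integral_natFloor {s : ℂ} (hs : 1 < s.re) :
    riemannZeta s = s * ∫ t in Ioi (1 : ℝ), (⌊t⌋₊ : ℂ) * (t : ℂ) ^ (-(s + 1)) := by
  rw [← LSeries_one_eq_riemannZeta hs, LSeries_eq_mul_integral' 1 zero_le_one (by simpa using hs)]
  · simp
  · simpa using isBigO_refl _ _

lemma riemannZeta_eq_sawtooth_integral_of_one_lt_re {s : ℂ} (hs : 1 < s.re) :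
    riemannZeta s =
      s * (∫ x in Ioi (1 : ℝ), (sawtooth x : ℂ) * (x : ℂ) ^ (-s - 1)) + 1 / (s - 1) + 1 / 2 := by
  have hs0 : s ≠ 0 := by rintro rfl; norm_num at hs
  have hs1 : s - 1 ≠ 0 := sub_ne_zero.mpr (by rintro rfl; simp at hs)
  have h1s : 1 - s ≠ 0 := by rw [← neg_sub]; exact neg_ne_zero.mpr hs1
  have hpow : IntegrableOn (fun t : ℝ ↦ (t : ℂ) ^ (-s)) (Ioi 1) :=
    integrableOn_Ioi_cpow_of_lt (by simpa using hs) one_pos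
  have hpow' : IntegrableOn (fun t : ℝ ↦ (t : ℂ) ^ (-s - 1)) (Ioi 1) :=
    integrableOn_Ioi_cpow_of_lt (by simp; linarith) one_pos
  have hsaw := integrableOn_sawtooth_mul_cpow (by linarith : 0 < s.re)
  have hfloor : ∀ t ∈ Ioi (1 : ℝ), (⌊t⌋₊ : ℂ) * (t : ℂ) ^ (-(s + 1)) =
      (sawtooth t : ℂ) * (t : ℂ) ^ (-s - 1) + (t : ℂ) ^ (-s) - 1 / 2 * (t : ℂ) ^ (-s - 1) := by
    intro t ht
    have ht0 : (t : ℂ) ≠ 0 := ofReal_ne_zero.mpr (by linarith [mem_Ioi.mp ht])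
    rw [neg_add', cpow_sub _ _ ht0, cpow_one, sawtooth,
      ← Int.natCast_floor_eq_floor (by linarith [mem_Ioi.mp ht] : (0 : ℝ) ≤ t)]
    push_cast
    field_simp
    ring
  rw [riemannZeta_eq_mul_integral_natFloor hs, setIntegral_congr_fun measurableSet_Ioi hfloor,
    integral_sub, integral_add hsaw hpow, integral_const_mul,
    integral_Ioi_cpow_of_lt (by simpa using hs) one_pos,
    integral_Ioi_cpow_of_lt (by simp; linarith) one_pos]
  · simp only [ofReal_one, one_cpow, sub_add_cancel, neg_add_eq_sub]
    field_simp
    ring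
  · exact hsaw.add hpow
  · exact hpow'.const_mul _

lemma riemannZeta_eqOn_sawtooth_integral :
    EqOn riemannZeta
      (fun s ↦ s * (∫ x in Ioi (1 : ℝ), (sawtooth x : ℂ) * (x : ℂ) ^ (-s - 1)) +
        1 / (s - 1) + 1 / 2)
      ({s : ℂ | 0 < s.re} \ {1}) := by
  have hU : IsOpen ({s : ℂ | 0 < s.re} \ {1}) :=
    (isOpen_lt continuous_const continuous_re).sdiff isClosed_singleton
  refine AnalyticOnNhd.eqOn_of_preconnected_of_eventuallyEq (𝕜 := ℂ) (z₀ := 2) ?_ ?_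
    (isPreconnected_re_pos_diff_singleton (by norm_num)) (by norm_num) ?_
  · exact DifferentiableOn.analyticOnNhd
      (fun s hs ↦ (differentiableAt_riemannZeta hs.2).differentiableWithinAt) hU
  · refine DifferentiableOn.analyticOnNhd
      (fun s hs ↦ DifferentiableAt.differentiableWithinAt ?_) hU
    have hs1 : s - 1 ≠ 0 := sub_ne_zero.mpr hs.2
    exact ((differentiableAt_id.mul (differentiableAt_integral_sawtooth_mul_cpow hs.1)).add
      ((differentiableAt_const 1).div (differentiableAt_id.sub_const 1) hs1)).add_const _
  · exact eventuallyEq_of_mem ((isOpen_lt continuous_const continuous_re).mem_nhds (by norm_num))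
      fun s hs ↦ riemannZeta_eq_sawtooth_integral_of_one_lt_re hs

theorem zeta_integral_repr_re_pos (z : ℂ) (hz : 0 < z.re) (hz1 : z ≠ 1) :
    IntegrableOn
      (fun x : ℝ => (((⌊x⌋ : ℤ) - x + 1 / 2 : ℝ) : ℂ) * (x : ℂ) ^ (-z - 1))
      (Ioi 1) ∧
    riemannZeta z =
      z * (∫ x in Ioi (1 : ℝ), (((⌊x⌋ : ℤ) - x + 1 / 2 : ℝ) : ℂ) * (x : ℂ) ^ (-z - 1))
        + 1 / (z - 1) + 1 / 2 :=
  ⟨integrableOn_sawtooth_mul_cpow hz, riemannZeta_eqOn_sawtooth_integral ⟨hz, hz1⟩⟩
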